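/- arXiv:1512.07988 — 3 statements merged into one kernel-verified Lean document; each statement's English description precedes it below -/
import Mathlib

section
/- For every natural number n, the word σ^n([white]) obtained by applying n times the Fibonacci substitution σ to the one-letter word [white] contains no two consecutive occurrences of the letter black; that is, in the sequence of colours of the nodes at level n of the Fibonacci tree, a black node is always in between two white ones and never adjacent to another black node. -/
/-- Colours: `false` = white, `true` = black. The Fibonacci substitution on letters:
σ(white) = [white, black, white], σ(black) = [black, white]. -/
def fibSubLetter : Bool → List Bool
  | false => [false, true, false]
  | true  => [true, false]

/-- The Fibonacci substitution extended to words by concatenation. -/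
def fibSub (w : List Bool) : List Bool := w.flatMap fibSubLetter

/-! Both images σ(white) and σ(black) avoid the factor black-black and end with white, so a
factor black-black of σ(w) could lie neither inside one image nor across the boundary of two
consecutive images. The word σ^0(white) = white is too short to contain it. -/

theorem List.isChain_flatMap_of_getLast {α β : Type*} {R : β → β → Prop} {f : α → List β}
    (hf : ∀ a, (f a).IsChain R) (hlast : ∀ a, ∀ x ∈ (f a).getLast?, ∀ y, R x y) (l : List α) :
    (l.flatMap f).IsChain R := by
  induction l with
  | nil => exact .nil
  | cons a l ih =>
    rw [List.flatMap_cons]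
    exact (hf a).append ih fun x hx y _ => hlast a x hx y

theorem isChain_fibSub (w : List Bool) :
    (fibSub w).IsChain (fun a b => a = false ∨ b = false) := by
  refine List.isChain_flatMap_of_getLast (fun a => ?_) (fun a x hx y => ?_) w
  · cases a <;> simp [fibSubLetter]
  · left
    cases a <;> simpa [fibSubLetter, eq_comm] using hx

theorem not_black_black_infix_fibSub (w : List Bool) : ¬ [true, true] <:+: fibSub w := fun h => by
  simpa using (isChain_fibSub w).infix h

/-- For every `n`, the word `σ^n([white])` contains no two consecutive occurrences of
the letter black: a black node at level `n` of the Fibonacci tree is never adjacent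
to another black node. -/
theorem fibWord_no_two_consecutive_blacks (n : ℕ) :
    ¬ ([true, true] <:+: fibSub^[n] [false]) := by
  cases n with
  | zero => exact fun h => by simpa using h.length_le
  | succ n =>
    rw [Function.iterate_succ_apply']
    exact not_black_black_infix_fibSub _
end

section
/- For every natural number n, the word σ^n([white]) is nonempty, its first letter is white and its last letter is white; consequently every occurrence of the letter black in σ^n([white]) is strictly interior and is immediately preceded and immediately followed by a white letter. -/
/-! σ keeps the first letter of a word and every letter image ends in white, so σ^n([white])
starts and ends in white. No letter image contains two adjacent blacks, and none arise at a junction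
of two images because each image ends in white. In a word with white ends and no two adjacent
blacks, every black lies strictly inside, between two whites. -/

theorem List.adjacent_eq_false_of_getElem?_eq_true {l : List Bool}
    (hchain : l.IsChain fun a b => a = false ∨ b = false)
    (hhead : l.head? = some false) (hlast : l.getLast? = some false)
    {i : ℕ} (hi : l[i]? = some true) :
    0 < i ∧ i + 1 < l.length ∧ l[i - 1]? = some false ∧ l[i + 1]? = some false := by
  obtain ⟨hil, hget⟩ := List.getElem?_eq_some_iff.mp hi
  have hpos : 0 < i := by
    rcases Nat.eq_zero_or_pos i with rfl | h
    · simp [List.head?_eq_getElem?, hi] at hhead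
    · exact h
  have hlen : i + 1 < l.length := by
    by_contra h
    have : l.getLast? = l[i]? := by rw [List.getLast?_eq_getElem?]; congr; omega
    simp [hlast, hi] at this
  have hpred := hchain.getElem (i - 1) (by omega)
  have hsucc := hchain.getElem i hlen
  simp only [Nat.sub_add_cancel hpos, hget, Bool.true_eq_false, or_false, false_or] at hpred hsucc
  exact ⟨hpos, hlen, by simp [hpred, show i - 1 < l.length by omega], by simp [hsucc, hlen]⟩

lemma fibSub_cons (a : Bool) (w : List Bool) :
    fibSub (a :: w) = fibSubLetter a ++ fibSub w := List.flatMap_cons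

lemma fibSub_head? (w : List Bool) : (fibSub w).head? = w.head? := by
  cases w with
  | nil => rfl
  | cons a w => cases a <;> rfl

lemma fibSub_iterate_head? (n : ℕ) (w : List Bool) : (fibSub^[n] w).head? = w.head? := by
  induction n with
  | zero => rfl
  | succ n ih => rw [Function.iterate_succ_apply', fibSub_head?, ih]

lemma fibSub_getLast? {w : List Bool} (hw : w ≠ []) : (fibSub w).getLast? = some false := by
  induction w with
  | nil => exact absurd rfl hw
  | cons a w ih =>
    rcases eq_or_ne w [] with rfl | hw'
    · cases a <;> rfl
    · rw [fibSub_cons, List.getLast?_append, ih hw']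
      rfl

lemma fibSub_isChain (w : List Bool) :
    (fibSub w).IsChain fun a b => a = false ∨ b = false := by
  induction w with
  | nil => exact .nil
  | cons a w ih =>
    rw [fibSub_cons]
    refine .append (by cases a <;> simp [fibSubLetter]) ih fun x hx _ _ => Or.inl ?_
    cases a <;> simpa [fibSubLetter] using hx.symm

/-- For every `n`, the word `σ^n([white])` is nonempty, starts and ends with white,
and every occurrence of black is strictly interior, immediately preceded and followed
by a white letter. -/
theorem fibWord_first_last_white_and_blacks_interior (n : ℕ) :
    fibSub^[n] [false] ≠ [] ∧
    (fibSub^[n] [false]).head? = some false ∧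
    (fibSub^[n] [false]).getLast? = some false ∧
    ∀ i : ℕ, (fibSub^[n] [false])[i]? = some true →
      0 < i ∧ i + 1 < (fibSub^[n] [false]).length ∧
      (fibSub^[n] [false])[i - 1]? = some false ∧
      (fibSub^[n] [false])[i + 1]? = some false := by
  have hhead (m : ℕ) : (fibSub^[m] [false]).head? = some false := fibSub_iterate_head? m _
  have hne (m : ℕ) : fibSub^[m] [false] ≠ [] :=
    List.ne_nil_of_mem (List.mem_of_mem_head? (hhead m))
  obtain ⟨hlast, hchain⟩ : (fibSub^[n] [false]).getLast? = some false ∧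
      (fibSub^[n] [false]).IsChain fun a b => a = false ∨ b = false := by
    cases n with
    | zero => exact ⟨rfl, .singleton _⟩
    | succ n =>
      rw [Function.iterate_succ_apply']
      exact ⟨fibSub_getLast? (hne n), fibSub_isChain _⟩
  exact ⟨hne n, hhead n, hlast,
    fun _ hi => List.adjacent_eq_false_of_getElem?_eq_true hchain (hhead n) hlast hi⟩
end

section
/- For every natural number n, the length of the word σ^n([white]) equals the Fibonacci number Fib(2n+2); that is, the number of nodes at level n of the Fibonacci tree rooted at a white node is the Fibonacci number of index 2n+2 (with Fib(1) = Fib(2) = 1). -/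
lemma fibSub_count_false (w : List Bool) :
    (fibSub w).count false = 2 * w.count false + w.count true := by
  induction w with
  | nil => rfl
  | cons a t ih =>
    cases a <;>
      simp only [fibSub, List.flatMap_cons, fibSubLetter, List.count_append,
        List.count_cons] at ih ⊢ <;> simp <;> omega

lemma fibSub_count_true (w : List Bool) :
    (fibSub w).count true = w.count false + w.count true := by
  induction w with
  | nil => rfl
  | cons a t ih =>
    cases a <;>
      simp only [fibSub, List.flatMap_cons, fibSubLetter, List.count_append,
        List.count_cons] at ih ⊢ <;> simp <;> omega

lemma length_eq_counts (w : List Bool) :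
    w.length = w.count false + w.count true := by
  induction w with
  | nil => rfl
  | cons a t ih =>
    cases a <;> simp only [List.length_cons, List.count_cons] <;> simp <;> omega

lemma counts_iterate (n : ℕ) :
    (fibSub^[n] [false]).count false = Nat.fib (2 * n + 1) ∧
    (fibSub^[n] [false]).count true = Nat.fib (2 * n) := by
  induction n with
  | zero => simp
  | succ k ih =>
    rw [Function.iterate_succ_apply', fibSub_count_false, fibSub_count_true,
      ih.1, ih.2]
    have h1 : 2 * (k + 1) + 1 = (2 * k + 1) + 2 := by ring
    have h2 : 2 * (k + 1) = 2 * k + 2 := by ring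
    rw [h1, h2, Nat.fib_add_two, Nat.fib_add_two]
    omega

/-- The number of nodes at level `n` of the Fibonacci tree rooted at a white node is
the Fibonacci number of index `2n+2`. -/
theorem fibWord_length (n : ℕ) :
    (fibSub^[n] [false]).length = Nat.fib (2 * n + 2) := by
  rw [length_eq_counts, (counts_iterate n).1, (counts_iterate n).2,
    Nat.fib_add_two]
  omega
end
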